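/- arXiv:1606.05361 — 6 statements merged into one kernel-verified Lean document; each statement's English description precedes it below -/
import Mathlib

section
/- Consider a two-period store with linear prices p_t(y) = p̄_t + p'_t y, completely inelastic demands d_t(p) = d*_t ≥ 0, efficiency ε, capacity E, nonbinding rate constraints, starting and finishing empty, and suppose p̄₁ < ε p̄₂. Then the change in consumer surplus caused by the introduction of the store equals min((ε p̄₂ − p̄₁)/(2(p'₁ + ε² p'₂)), E) · (ε p'₂ d*₂ − p'₁ d*₁), and this is strictly negative whenever ε p'₂ d*₂ < p'₁ d*₁. -/
/-!
For `p̄₁ < ε p̄₂` the unconstrained optimum `(ε p̄₂ − p̄₁) / (2 (p'₁ + ε² p'₂))` is positive, so the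
store buys `x > 0` in period 1 and sells `εx` in period 2. Consumers then pay `x p'₁` more per unit of
`d₁` and `εx p'₂` less per unit of `d₂`, which gives the closed form, negative exactly when the
period-1 loss outweighs the period-2 gain.
-/

/-- The function `h` of the paper: a purchase `y ≥ 0` adds `y` to the market, a sale `y < 0`
delivers only `ε y` because of the round-trip efficiency. -/
noncomputable def netMarketFlow (ε y : ℝ) : ℝ := if 0 ≤ y then y else ε * y

lemma netMarketFlow_of_nonneg (ε : ℝ) {y : ℝ} (hy : 0 ≤ y) : netMarketFlow ε y = y :=
  if_pos hy

lemma netMarketFlow_neg_of_nonneg (ε : ℝ) {x : ℝ} (hx : 0 ≤ x) :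
    netMarketFlow ε (-x) = -(ε * x) := by
  rcases hx.eq_or_lt with rfl | hx
  · simp [netMarketFlow]
  · rw [netMarketFlow, if_neg (by linarith)]
    ring

lemma neg_netMarketFlow_buy_sell (ε a b : ℝ) {x : ℝ} (hx : 0 ≤ x) :
    -(netMarketFlow ε x * a + netMarketFlow ε (-x) * b) = x * (ε * b - a) := by
  rw [netMarketFlow_of_nonneg ε hx, netMarketFlow_neg_of_nonneg ε hx]
  ring

lemma optimalPurchase_pos {ε pbar1 pbar2 p1' p2' E : ℝ} (hq1 : 0 < p1') (hq2 : 0 < p2')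
    (hE : 0 < E) (hbuy : pbar1 < ε * pbar2) :
    0 < min ((ε * pbar2 - pbar1) / (2 * (p1' + ε ^ 2 * p2'))) E :=
  lt_min (div_pos (by linarith) (by positivity)) hE

theorem stmt4_general (ε pbar1 pbar2 p1' p2' d1 d2 E : ℝ)
    (hq1 : 0 < p1') (hq2 : 0 < p2')
    (hE : 0 < E) (hbuy : pbar1 < ε * pbar2) :
    let x := min ((ε * pbar2 - pbar1) / (2 * (p1' + ε ^ 2 * p2'))) E
    let h : ℝ → ℝ := fun y => if 0 ≤ y then y else ε * y
    let ΔCS := -(h x * p1' * d1 + h (-x) * p2' * d2)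
    ΔCS = x * (ε * p2' * d2 - p1' * d1) ∧ (ε * p2' * d2 < p1' * d1 → ΔCS < 0) := by
  intro x h ΔCS
  have hx : 0 < x := optimalPurchase_pos hq1 hq2 hE hbuy
  have hΔ : ΔCS = x * (ε * p2' * d2 - p1' * d1) := by
    simpa only [netMarketFlow, ← mul_assoc] using
      neg_netMarketFlow_buy_sell ε (p1' * d1) (p2' * d2) hx.le
  refine ⟨hΔ, fun hlt => ?_⟩
  rw [hΔ]
  exact mul_neg_of_pos_of_neg hx (by linarith)

/-- two-period store, linear prices, inelastic demands `d_t`.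
With `pbar₁ < ε pbar₂` and optimal purchase `x = min(x*, E)`, the change in
consumer surplus `−∑_t h(x_t) p'_t d_t` equals
`min(x*, E) · (ε p'₂ d₂ − p'₁ d₁)`, strictly negative when
`ε p'₂ d₂ < p'₁ d₁`. -/
theorem stmt4 (ε pbar1 pbar2 p1' p2' d1 d2 E : ℝ) (hε0 : 0 < ε) (hε1 : ε ≤ 1)
    (hp1 : 0 < pbar1) (hp2 : 0 < pbar2) (hq1 : 0 < p1') (hq2 : 0 < p2')
    (hd1 : 0 ≤ d1) (hd2 : 0 ≤ d2) (hE : 0 < E) (hbuy : pbar1 < ε * pbar2) :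
    let x := min ((ε * pbar2 - pbar1) / (2 * (p1' + ε ^ 2 * p2'))) E
    let h : ℝ → ℝ := fun y => if 0 ≤ y then y else ε * y
    let ΔCS := -(h x * p1' * d1 + h (-x) * p2' * d2)
    ΔCS = x * (ε * p2' * d2 - p1' * d1) ∧ (ε * p2' * d2 < p1' * d1 → ΔCS < 0) :=
  stmt4_general ε pbar1 pbar2 p1' p2' d1 d2 E hq1 hq2 hE hbuy
end

section
/- Suppose for store j there exists a vector μ* = (μ*₁,…,μ*_T) and a feasible policy S* = (S*₀,…,S*_T) such that: (ii) for each t, x_t(S*) = S*_t − S*_{t−1} minimizes C_t(x) − μ*_t x over the rate-constraint interval X = [−P_O, P_I]; and (iii) the complementary slackness conditions hold: μ*_{t+1} = μ*_t if 0 < S*_t < E, μ*_{t+1} ≤ μ*_t if S*_t = 0, μ*_{t+1} ≥ μ*_t if S*_t = E, for 1 ≤ t ≤ T−1. Then S* minimizes ∑_{t=1}^T C_t(x_t(S)) over all policies S satisfying S₀ = S*₀, S_T = S*_T, 0 ≤ S_t ≤ E, and x_t(S) ∈ X. -/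
/-!
Weak duality for the Lagrangian relaxation of the store constraints. Pricing the increments
with `μ*`, condition (ii) says `S*` minimizes `∑ (C_t(x_t) − μ*_t x_t)` over all rate-feasible
policies. For a feasible `S`, summation by parts with `D = S* − S` (which vanishes at `0` and
`T`) gives `∑ μ*_t (x_t(S*) − x_t(S)) = ∑_{t<T} (μ*_t − μ*_{t+1}) D_t`, and complementary
slackness makes each term nonpositive, so the price terms can only favour `S`.
-/

/-- Feasibility of a policy `S` for the single-store problem: fixed endpoints,
capacity constraints `0 ≤ S_t ≤ E` for `1 ≤ t ≤ T−1`, and rate constraints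
`−P_O ≤ S_t − S_{t−1} ≤ P_I` for `1 ≤ t ≤ T`. -/
def Feasible (T : ℕ) (E PO PI S0 ST : ℝ) (S : ℕ → ℝ) : Prop :=
  S 0 = S0 ∧ S T = ST ∧
  (∀ t, 1 ≤ t → t < T → 0 ≤ S t ∧ S t ≤ E) ∧
  (∀ t, 1 ≤ t → t ≤ T → -PO ≤ S t - S (t - 1) ∧ S t - S (t - 1) ≤ PI)

open Finset

theorem sum_Icc_mul_sub_pred_eq (μ D : ℕ → ℝ) (T : ℕ) :
    ∑ t ∈ Icc 1 T, μ t * (D t - D (t - 1)) =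
      μ (T + 1) * D T - μ 1 * D 0 + ∑ t ∈ Icc 1 T, (μ t - μ (t + 1)) * D t := by
  induction T with
  | zero => simp
  | succ T ih =>
    rw [sum_Icc_succ_top (by omega), sum_Icc_succ_top (by omega), ih, Nat.add_sub_cancel]
    ring

theorem sub_mul_sub_nonpos_of_slackness {E s s' a b : ℝ} (hs : 0 ≤ s ∧ s ≤ E)
    (hs' : 0 ≤ s' ∧ s' ≤ E) (hint : 0 < s ∧ s < E → b = a) (hlow : s = 0 → b ≤ a)
    (hhigh : s = E → a ≤ b) : (a - b) * (s - s') ≤ 0 := by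
  rcases hs.1.eq_or_lt with hzero | hpos
  · exact mul_nonpos_of_nonneg_of_nonpos (by linarith [hlow hzero.symm]) (by linarith)
  rcases hs.2.eq_or_lt with hfull | hlt
  · exact mul_nonpos_of_nonpos_of_nonneg (by linarith [hhigh hfull]) (by linarith)
  · simp [hint ⟨hpos, hlt⟩]

theorem sum_mul_increment_le_of_slackness {T : ℕ} {E : ℝ} {S Sstar μ : ℕ → ℝ}
    (h0 : Sstar 0 = S 0) (hT : Sstar T = S T)
    (hcap : ∀ t, 1 ≤ t → t < T → 0 ≤ S t ∧ S t ≤ E)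
    (hcapstar : ∀ t, 1 ≤ t → t < T → 0 ≤ Sstar t ∧ Sstar t ≤ E)
    (hcs : ∀ t, 1 ≤ t → t < T →
      ((0 < Sstar t ∧ Sstar t < E → μ (t + 1) = μ t) ∧
       (Sstar t = 0 → μ (t + 1) ≤ μ t) ∧
       (Sstar t = E → μ t ≤ μ (t + 1)))) :
    ∑ t ∈ Icc 1 T, μ t * (Sstar t - Sstar (t - 1)) ≤
      ∑ t ∈ Icc 1 T, μ t * (S t - S (t - 1)) := by
  set D : ℕ → ℝ := fun t => Sstar t - S t with hD
  have hD0 : D 0 = 0 := sub_eq_zero.mpr h0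
  have hDT : D T = 0 := sub_eq_zero.mpr hT
  have hparts := sum_Icc_mul_sub_pred_eq μ D T
  rw [hD0, hDT, mul_zero, mul_zero, sub_zero, zero_add] at hparts
  have hterm : ∀ t ∈ Icc 1 T, (μ t - μ (t + 1)) * D t ≤ 0 := by
    intro t ht
    obtain ⟨h1t, htT⟩ := mem_Icc.mp ht
    rcases htT.eq_or_lt with rfl | htT
    · rw [hDT, mul_zero]
    obtain ⟨hint, hlow, hhigh⟩ := hcs t h1t htT
    exact sub_mul_sub_nonpos_of_slackness (hcapstar t h1t htT) (hcap t h1t htT) hint hlow hhigh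
  have hdiff : ∑ t ∈ Icc 1 T, μ t * (D t - D (t - 1)) =
      ∑ t ∈ Icc 1 T, μ t * (Sstar t - Sstar (t - 1)) -
        ∑ t ∈ Icc 1 T, μ t * (S t - S (t - 1)) := by
    rw [← sum_sub_distrib]
    exact sum_congr rfl fun t _ => by simp only [hD]; ring
  linarith [sum_nonpos hterm]

theorem stmt5_general (T : ℕ) (E PO PI S0 ST : ℝ)
    (C : ℕ → ℝ → ℝ) (Sstar μ : ℕ → ℝ)
    (hfeas : Feasible T E PO PI S0 ST Sstar)
    (hmin : ∀ t, 1 ≤ t → t ≤ T → ∀ x ∈ Set.Icc (-PO) PI,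
      C t (Sstar t - Sstar (t - 1)) - μ t * (Sstar t - Sstar (t - 1)) ≤ C t x - μ t * x)
    (hcs : ∀ t, 1 ≤ t → t < T →
      ((0 < Sstar t ∧ Sstar t < E → μ (t + 1) = μ t) ∧
       (Sstar t = 0 → μ (t + 1) ≤ μ t) ∧
       (Sstar t = E → μ t ≤ μ (t + 1)))) :
    ∀ S : ℕ → ℝ, Feasible T E PO PI S0 ST S →
      ∑ t ∈ Finset.Icc 1 T, C t (Sstar t - Sstar (t - 1)) ≤
        ∑ t ∈ Finset.Icc 1 T, C t (S t - S (t - 1)) := by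
  rintro S ⟨h0, hT, hcap, hrate⟩
  obtain ⟨h0star, hTstar, hcapstar, -⟩ := hfeas
  have hlagrangian :
      ∑ t ∈ Icc 1 T, (C t (Sstar t - Sstar (t - 1)) - μ t * (Sstar t - Sstar (t - 1))) ≤
        ∑ t ∈ Icc 1 T, (C t (S t - S (t - 1)) - μ t * (S t - S (t - 1))) := by
    refine sum_le_sum fun t ht => ?_
    obtain ⟨h1t, htT⟩ := mem_Icc.mp ht
    exact hmin t h1t htT _ (hrate t h1t htT)
  have hprice := sum_mul_increment_le_of_slackness (h0star.trans h0.symm)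
    (hTstar.trans hT.symm) hcap hcapstar hcs
  rw [sum_sub_distrib, sum_sub_distrib] at hlagrangian
  linarith

/-- Lagrangian sufficiency: if `S*` is feasible, each increment
`x_t(S*)` minimizes `C_t x − μ*_t x` over the rate interval, and the
complementary slackness conditions hold, then `S*` minimizes the total cost
over all feasible policies. -/
theorem stmt5 (T : ℕ) (hT : 1 ≤ T) (E PO PI S0 ST : ℝ)
    (C : ℕ → ℝ → ℝ) (Sstar μ : ℕ → ℝ)
    (hfeas : Feasible T E PO PI S0 ST Sstar)
    (hmin : ∀ t, 1 ≤ t → t ≤ T → ∀ x ∈ Set.Icc (-PO) PI,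
      C t (Sstar t - Sstar (t - 1)) - μ t * (Sstar t - Sstar (t - 1)) ≤ C t x - μ t * x)
    (hcs : ∀ t, 1 ≤ t → t < T →
      ((0 < Sstar t ∧ Sstar t < E → μ (t + 1) = μ t) ∧
       (Sstar t = 0 → μ (t + 1) ≤ μ t) ∧
       (Sstar t = E → μ t ≤ μ (t + 1)))) :
    ∀ S : ℕ → ℝ, Feasible T E PO PI S0 ST S →
      ∑ t ∈ Finset.Icc 1 T, C t (Sstar t - Sstar (t - 1)) ≤
        ∑ t ∈ Finset.Icc 1 T, C t (S t - S (t - 1)) :=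
  stmt5_general T E PO PI S0 ST C Sstar μ hfeas hmin hcs
end

section
/- Consider n competing stores with identical rate constraints and efficiencies, with capacities E₁ ≤ ⋯ ≤ E_n, starting levels ordered as S*_{1,0} ≤ ⋯ ≤ S*_{n,0} and finishing levels ordered as S*_{1,T} ≤ ⋯ ≤ S*_{n,T}. Then at any Nash equilibrium (S*₁,…,S*_n) with associated Lagrange multipliers (μ*₁,…,μ*_n) satisfying the optimality conditions, the levels of the stores are ordered at all times: S*_{i,t} ≤ S*_{j,t} for all t whenever E_i ≤ E_j. -/
/-!
Suppose store `i` (the smaller one) is strictly above store `j` at some time. Since the levels are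
ordered at both ends of the horizon, this happens on a maximal window `(a, b)`. Entering the
window, `i` charges more than `j`, so `μ j < μ i` at `a + 1`; leaving it, `j` charges more, so
`μ i < μ j` at `b`. Inside the window `i` is never empty (it is above `j`) and `j` is never full
(it is below `i ≤ E i ≤ E j`), so by complementary slackness `μ i` can only rise and `μ j` can only
fall across it — contradicting the reversal of the multipliers.
-/

/-- Complementary slackness of one store at one step: `x` is its level, `e` its capacity and
`μ`, `μ'` its multipliers before and after the step. -/
def ComplementarySlack (x e μ μ' : ℝ) : Prop :=
  (0 < x ∧ x < e → μ' = μ) ∧ (x = 0 → μ' ≤ μ) ∧ (x = e → μ ≤ μ')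

namespace ComplementarySlack

variable {x e μ μ' : ℝ}

theorem le_of_pos (h : ComplementarySlack x e μ μ') (hx : 0 < x) (hxe : x ≤ e) : μ ≤ μ' := by
  rcases hxe.lt_or_eq with hxe | hxe
  · exact (h.1 ⟨hx, hxe⟩).ge
  · exact h.2.2 hxe

theorem le_of_lt (h : ComplementarySlack x e μ μ') (hx : 0 ≤ x) (hxe : x < e) : μ' ≤ μ := by
  rcases hx.lt_or_eq with hx | hx
  · exact (h.1 ⟨hx, hxe⟩).le
  · exact h.2.1 hx.symm

end ComplementarySlack

theorem Nat.exists_maximal_interval_of_not {P : ℕ → Prop} {t T : ℕ} (h0 : P 0) (hT : P T)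
    (ht : ¬ P t) (htT : t ≤ T) :
    ∃ a b, a < t ∧ t < b ∧ b ≤ T ∧ P a ∧ P b ∧ ∀ s, a < s → s < b → ¬ P s := by
  classical
  have htT' : t < T := htT.lt_of_ne (by rintro rfl; exact ht hT)
  have hafter : ∃ s, t < s ∧ P s := ⟨T, htT', hT⟩
  obtain ⟨htb, hb⟩ := Nat.find_spec hafter
  have hat : Nat.findGreatest P t < t :=
    (Nat.findGreatest_le t).lt_of_ne fun h => ht (h ▸ Nat.findGreatest_spec (Nat.zero_le t) h0)
  refine ⟨Nat.findGreatest P t, Nat.find hafter, hat, htb, Nat.find_min' hafter ⟨htT', hT⟩,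
    Nat.findGreatest_spec (Nat.zero_le t) h0, hb, fun s has hsb hs => ?_⟩
  rcases le_or_gt s t with hst | hts
  · exact Nat.findGreatest_is_greatest has hst hs
  · exact Nat.find_min hafter hsb ⟨hts, hs⟩

theorem stmt10_general (n : ℕ) (T : ℕ)
    (E : Fin n → ℝ)
    (S μ : Fin n → ℕ → ℝ)
    -- capacity constraints at equilibrium
    (hcap : ∀ j, ∀ t ≤ T, 0 ≤ S j t ∧ S j t ≤ E j)
    -- starting and finishing levels ordered by the capacity constraints
    (hstart : ∀ i j, E i ≤ E j → S i 0 ≤ S j 0)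
    (hfinish : ∀ i j, E i ≤ E j → S i T ≤ S j T)
    -- monotone best response to the multipliers (equation (16))
    (hkey : ∀ i j, ∀ t, 1 ≤ t → t ≤ T →
      (μ j t ≤ μ i t ↔ S j t - S j (t - 1) ≤ S i t - S i (t - 1)))
    -- complementary slackness for each store
    (hcs : ∀ j, ∀ t, 1 ≤ t → t < T →
      ((0 < S j t ∧ S j t < E j → μ j (t + 1) = μ j t) ∧
       (S j t = 0 → μ j (t + 1) ≤ μ j t) ∧
       (S j t = E j → μ j t ≤ μ j (t + 1)))) :
    ∀ i j, E i ≤ E j → ∀ t ≤ T, S i t ≤ S j t := by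
  intro i j hE t htT
  by_contra hlt
  obtain ⟨a, b, hat, htb, hbT, hSa, hSb, hgap⟩ := Nat.exists_maximal_interval_of_not
    (P := fun s => S i s ≤ S j s) (hstart i j hE) (hfinish i j hE) hlt htT
  have hrev : ∀ s, a < s → s < b → S j s < S i s := fun s has hsb => not_le.1 (hgap s has hsb)
  have hμi : MonotoneOn (μ i) (Set.Icc (a + 1) b) :=
    monotoneOn_of_le_add_one Set.ordConnected_Icc fun s _ ⟨has, _⟩ ⟨_, hsb⟩ =>
      ComplementarySlack.le_of_pos (hcs i s (by omega) (by omega))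
        ((hcap j s (by omega)).1.trans_lt (hrev s (by omega) hsb)) (hcap i s (by omega)).2
  have hμj : AntitoneOn (μ j) (Set.Icc (a + 1) b) :=
    antitoneOn_of_add_one_le Set.ordConnected_Icc fun s _ ⟨has, _⟩ ⟨_, hsb⟩ =>
      ComplementarySlack.le_of_lt (hcs j s (by omega) (by omega)) (hcap j s (by omega)).1
        ((hrev s (by omega) hsb).trans_le ((hcap i s (by omega)).2.trans hE))
  have henter : μ j (a + 1) < μ i (a + 1) := not_le.1 fun h => by
    have := (hkey j i (a + 1) (by omega) (by omega)).1 h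
    simp only [Nat.add_sub_cancel] at this
    linarith [hrev (a + 1) (by omega) (by omega)]
  have hleave : μ i b < μ j b := not_le.1 fun h => by
    have := (hkey i j b (by omega) hbT).1 h
    linarith [hrev (b - 1) (by omega) (by omega)]
  have hab : a + 1 ∈ Set.Icc (a + 1) b := ⟨le_rfl, by omega⟩
  have hb : b ∈ Set.Icc (a + 1) b := ⟨by omega, le_rfl⟩
  linarith [hμi hab hb (by omega), hμj hab hb (by omega)]

/-- ordering of store levels at a Nash equilibrium: consider
`n` competing stores with identical rate constraints and efficiencies, whose
starting and finishing levels are ordered by their capacities.  At a Nash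
equilibrium `S` with associated Lagrange multipliers `μ` satisfying the
optimality conditions — in particular the monotone-best-response property
`μ i t ≥ μ j t ↔ x_t(S i) ≥ x_t(S j)` and complementary slackness — the
levels of the stores are at all times ordered by their capacities. -/
theorem stmt10 (n : ℕ) (T : ℕ) (hT : 1 ≤ T)
    (E : Fin n → ℝ) (hEpos : ∀ j, 0 < E j)
    (S μ : Fin n → ℕ → ℝ)
    -- capacity constraints at equilibrium
    (hcap : ∀ j, ∀ t ≤ T, 0 ≤ S j t ∧ S j t ≤ E j)
    -- starting and finishing levels ordered by the capacity constraints
    (hstart : ∀ i j, E i ≤ E j → S i 0 ≤ S j 0)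
    (hfinish : ∀ i j, E i ≤ E j → S i T ≤ S j T)
    -- monotone best response to the multipliers (equation (16))
    (hkey : ∀ i j, ∀ t, 1 ≤ t → t ≤ T →
      (μ j t ≤ μ i t ↔ S j t - S j (t - 1) ≤ S i t - S i (t - 1)))
    -- complementary slackness for each store
    (hcs : ∀ j, ∀ t, 1 ≤ t → t < T →
      ((0 < S j t ∧ S j t < E j → μ j (t + 1) = μ j t) ∧
       (S j t = 0 → μ j (t + 1) ≤ μ j t) ∧
       (S j t = E j → μ j t ≤ μ j (t + 1)))) :
    ∀ i j, E i ≤ E j → ∀ t ≤ T, S i t ≤ S j t :=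
  stmt10_general n T E S μ hcap hstart hfinish hkey hcs
end

section
/- With linear prices p_t(x) = p̄_t + p'_t x, common efficiency ε, no capacity or rate constraints, common starting level S*₀ = finishing level (large enough that stores never empty at equilibrium), the unique symmetric Nash equilibrium common policy S̄ satisfies: there exists λ > 0, independent of n, with x_t(S̄) = (λ − p̄_t)/((n+1)p'_t) if p̄_t < λ; x_t(S̄) = 0 if λ ≤ p̄_t ≤ λ/ε; and x_t(S̄) = (λ − ε p̄_t)/((n+1)ε² p'_t) if p̄_t ≥ λ/ε; where λ is chosen so that ∑_t x_t(S̄) = 0. -/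
/-!
Adjoin a multiplier `λ` for the cyclic constraint. Since `λ ∑ₜ xₜ` vanishes on the constraint
set, minimizing the symmetric objective there is the same as minimizing the Lagrangian
`∑ₜ (p̄ₜ h(xₜ) + ½(n+1)p'ₜ h(xₜ)² - λ xₜ)`, which splits into independent one-period problems.
For `ε ≤ 1` each one-period function is a strictly convex piecewise quadratic (the kink of `h`
at `0` bends upwards), so it has a unique minimizer, given by the three-case formula. Its value
is `1/(n+1)` times the value for `n = 0`, so one `λ` making the minimizers sum to `0` works for
every `n`; it exists and is positive by the intermediate value theorem, because the sum is
negative at `λ = 0` and nonnegative for `λ ≥ ε ∑ₜ p̄ₜ`. Uniqueness of the one-period minimizers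
then forces every constrained minimizer to coincide with them.
-/

/-- `hfun ε x`: volume traded, `x` when buying, `ε x` when selling. -/
noncomputable def hfun (ε x : ℝ) : ℝ := if 0 ≤ x then x else ε * x

/-- The objective of the unconstrained symmetric `n`-store problem: the common
policy with increments `x` at the symmetric Nash equilibrium minimizes
`∑_t (pbar_t h(x_t) + ½ (n+1) p'_t h(x_t)²)` subject to `∑_t x_t = 0`. -/
noncomputable def symObj (T n : ℕ) (pbar p' : ℕ → ℝ) (ε : ℝ) (x : ℕ → ℝ) : ℝ :=
  ∑ t ∈ Finset.Icc 1 T,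
    (pbar t * hfun ε (x t) + ((n : ℝ) + 1) / 2 * p' t * (hfun ε (x t)) ^ 2)

open Finset

noncomputable section

/-- The period term of the Lagrangian; in the theorem `a = p̄ₜ` and `b = ½(n+1)p'ₜ`. -/
def periodLagrangian (a b ε lam y : ℝ) : ℝ := a * hfun ε y + b * hfun ε y ^ 2 - lam * y

/-- The minimizer of `periodLagrangian a b ε lam`, with the three cases folded into `max`/`min`. -/
def lagrangeIncrement (a b ε lam : ℝ) : ℝ :=
  max (lam - a) 0 / (2 * b) + min (lam - ε * a) 0 / (2 * b * ε ^ 2)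

end

section OnePeriod

variable {a b ε lam y : ℝ}

theorem periodLagrangian_of_nonneg (hy : 0 ≤ y) :
    periodLagrangian a b ε lam y = b * y ^ 2 - (lam - a) * y := by
  simp only [periodLagrangian, hfun, if_pos hy]
  ring

theorem periodLagrangian_of_nonpos (hy : y ≤ 0) :
    periodLagrangian a b ε lam y = b * ε ^ 2 * y ^ 2 - (lam - ε * a) * y := by
  rcases hy.lt_or_eq with hy | rfl
  · simp only [periodLagrangian, hfun, if_neg hy.not_ge]
    ring
  · simp [periodLagrangian, hfun]

theorem lagrangeIncrement_of_le (ha : 0 ≤ a) (hε1 : ε ≤ 1) (h : a ≤ lam) :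
    lagrangeIncrement a b ε lam = (lam - a) / (2 * b) := by
  have hεa : ε * a ≤ lam := by nlinarith
  rw [lagrangeIncrement, max_eq_left (sub_nonneg.2 h), min_eq_right (sub_nonneg.2 hεa),
    zero_div, add_zero]

theorem lagrangeIncrement_eq_zero (h₁ : ε * a ≤ lam) (h₂ : lam ≤ a) :
    lagrangeIncrement a b ε lam = 0 := by
  rw [lagrangeIncrement, max_eq_right (sub_nonpos.2 h₂), min_eq_right (sub_nonneg.2 h₁)]
  simp

theorem lagrangeIncrement_of_le_mul (ha : 0 ≤ a) (hε1 : ε ≤ 1) (h : lam ≤ ε * a) :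
    lagrangeIncrement a b ε lam = (lam - ε * a) / (2 * b * ε ^ 2) := by
  have hla : lam ≤ a := by nlinarith
  rw [lagrangeIncrement, max_eq_right (sub_nonpos.2 hla), min_eq_left (sub_nonpos.2 h),
    zero_div, zero_add]

theorem lagrangeIncrement_mul (c : ℝ) :
    lagrangeIncrement a (c * b) ε lam = lagrangeIncrement a b ε lam / c := by
  simp only [lagrangeIncrement]
  ring

theorem continuous_lagrangeIncrement : Continuous (lagrangeIncrement a b ε) := by
  unfold lagrangeIncrement
  fun_prop

theorem periodLagrangian_lagrangeIncrement_lt (ha : 0 ≤ a) (hb : 0 < b) (hε : 0 < ε)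
    (hε1 : ε ≤ 1) (hy : y ≠ lagrangeIncrement a b ε lam) :
    periodLagrangian a b ε lam (lagrangeIncrement a b ε lam) < periodLagrangian a b ε lam y := by
  set x := lagrangeIncrement a b ε lam with hx
  have hbε : 0 < b * ε ^ 2 := by positivity
  have hyx : 0 < (y - x) ^ 2 := pow_two_pos_of_ne_zero (sub_ne_zero.2 hy)
  rcases le_or_gt a lam with hbuy | hsell
  · have hstat : 2 * b * x = lam - a := by
      rw [hx, lagrangeIncrement_of_le ha hε1 hbuy]
      field_simp
    have hx0 : 0 ≤ x := by nlinarith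
    rw [periodLagrangian_of_nonneg hx0]
    rcases le_or_gt 0 y with hy0 | hy0
    · rw [periodLagrangian_of_nonneg hy0]
      nlinarith
    · rw [periodLagrangian_of_nonpos hy0.le]
      have hy' : 0 ≤ -y := by linarith
      nlinarith [mul_pos hbε (pow_pos (neg_pos.2 hy0) 2), mul_nonneg hb.le (mul_nonneg hx0 hy'),
        mul_nonneg (by nlinarith : 0 ≤ a - ε * a) hy']
  rcases le_or_gt lam (ε * a) with hsell' | hidle
  · have hstat : 2 * b * ε ^ 2 * x = lam - ε * a := by
      rw [hx, lagrangeIncrement_of_le_mul ha hε1 hsell']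
      field_simp
    have hx0 : x ≤ 0 := by nlinarith [pow_pos hε 2]
    rw [periodLagrangian_of_nonpos hx0]
    rcases le_or_gt 0 y with hy0 | hy0
    · rw [periodLagrangian_of_nonneg hy0]
      have hε2 : ε ^ 2 ≤ 1 := pow_le_one₀ hε.le hε1
      nlinarith [mul_pos hbε hyx, mul_nonneg hy0 (by nlinarith : 0 ≤ a - ε * a),
        mul_nonneg hb.le (mul_nonneg (sub_nonneg.2 hε2) (sq_nonneg y))]
    · rw [periodLagrangian_of_nonpos hy0.le]
      nlinarith [mul_pos hbε hyx]
  · have hx0 : x = 0 := lagrangeIncrement_eq_zero hidle.le hsell.le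
    rw [hx0, sub_zero] at hyx
    rw [hx0, periodLagrangian_of_nonneg le_rfl]
    rcases le_or_gt 0 y with hy0 | hy0
    · rw [periodLagrangian_of_nonneg hy0]
      nlinarith [mul_pos hb hyx, mul_nonneg hy0 (sub_nonneg.2 hsell.le)]
    · rw [periodLagrangian_of_nonpos hy0.le]
      nlinarith [mul_pos hbε hyx, mul_pos (neg_pos.2 hy0) (sub_pos.2 hidle)]

end OnePeriod

theorem eq_of_sum_le_sum_of_forall_lt {ι α : Type*} {s : Finset ι} {f : ι → α → ℝ}
    {x y : ι → α} (hy : ∀ i ∈ s, ∀ z, z ≠ y i → f i (y i) < f i z)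
    (hle : ∑ i ∈ s, f i (x i) ≤ ∑ i ∈ s, f i (y i)) : ∀ i ∈ s, x i = y i := by
  by_contra! ⟨j, hj, hne⟩
  have hlt : ∑ i ∈ s, f i (y i) < ∑ i ∈ s, f i (x i) := by
    refine sum_lt_sum (fun i hi => ?_) ⟨j, hj, hy j hj _ hne⟩
    by_cases h : x i = y i
    · rw [h]
    · exact (hy i hi _ h).le
  exact hlt.not_ge hle

theorem exists_pos_sum_lagrangeIncrement_eq_zero {ι : Type*} {s : Finset ι} (hs : s.Nonempty)
    {a b : ι → ℝ} (ha : ∀ i ∈ s, 0 < a i) (hb : ∀ i ∈ s, 0 < b i) {ε : ℝ} (hε : 0 < ε) :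
    ∃ lam, 0 < lam ∧ ∑ i ∈ s, lagrangeIncrement (a i) (b i) ε lam = 0 := by
  set φ : ℝ → ℝ := fun lam => ∑ i ∈ s, lagrangeIncrement (a i) (b i) ε lam
  set M := ∑ i ∈ s, ε * a i
  have hφ0 : φ 0 < 0 := by
    refine sum_neg (fun i hi => ?_) hs
    have := ha i hi
    have := hb i hi
    rw [lagrangeIncrement, max_eq_right (by linarith), min_eq_left (by nlinarith)]
    simp only [zero_div, zero_add, zero_sub]
    exact div_neg_of_neg_of_pos (by nlinarith) (by positivity)
  have hφM : 0 ≤ φ M := by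
    refine sum_nonneg (fun i hi => ?_)
    have hεa : ε * a i ≤ M := single_le_sum (fun j hj => (mul_pos hε (ha j hj)).le) hi
    rw [lagrangeIncrement, min_eq_right (sub_nonneg.2 hεa), zero_div, add_zero]
    exact div_nonneg (le_max_right _ _) (by linarith [hb i hi])
  have hM : 0 ≤ M := sum_nonneg fun i hi => (mul_pos hε (ha i hi)).le
  obtain ⟨lam, hlam, hφlam⟩ := intermediate_value_Icc hM
    (continuous_finsetSum s fun i _ => continuous_lagrangeIncrement).continuousOn ⟨hφ0.le, hφM⟩
  refine ⟨lam, hlam.1.lt_of_ne ?_, hφlam⟩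
  rintro rfl
  exact hφ0.ne hφlam

theorem symObj_eq_sum_periodLagrangian (T n : ℕ) (pbar p' : ℕ → ℝ) (ε lam : ℝ) (x : ℕ → ℝ) :
    symObj T n pbar p' ε x = ∑ t ∈ Icc 1 T,
      periodLagrangian (pbar t) (((n : ℝ) + 1) / 2 * p' t) ε lam (x t) +
      lam * ∑ t ∈ Icc 1 T, x t := by
  rw [symObj, mul_sum, ← sum_add_distrib]
  refine sum_congr rfl fun t _ => ?_
  rw [periodLagrangian]
  ring

/-- with linear prices, common efficiency `ε`, and no capacity
or rate constraints (only the cyclic constraint `∑_t x_t = 0`), the symmetric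
`n`-store Nash equilibrium increments are given by the three-case formula with
a Lagrange multiplier `λ > 0` independent of `n`. -/
theorem stmt15 (T : ℕ) (hT : 1 ≤ T) (pbar p' : ℕ → ℝ)
    (hpbar : ∀ t, 1 ≤ t → t ≤ T → 0 < pbar t) (hp' : ∀ t, 1 ≤ t → t ≤ T → 0 < p' t)
    (ε : ℝ) (hε0 : 0 < ε) (hε1 : ε ≤ 1)
    -- for each `n ≥ 1`, `xf n` are the equilibrium increments: they satisfy
    -- the cyclic constraint and minimize the symmetric objective under it
    (xf : ℕ → ℕ → ℝ)
    (hcyc : ∀ n, 1 ≤ n → ∑ t ∈ Finset.Icc 1 T, xf n t = 0)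
    (hmin : ∀ n, 1 ≤ n → ∀ y : ℕ → ℝ, (∑ t ∈ Finset.Icc 1 T, y t = 0) →
      symObj T n pbar p' ε (xf n) ≤ symObj T n pbar p' ε y) :
    ∃ lam : ℝ, 0 < lam ∧ ∀ n, 1 ≤ n → ∀ t, 1 ≤ t → t ≤ T →
      (pbar t < lam → xf n t = (lam - pbar t) / (((n : ℝ) + 1) * p' t)) ∧
      (lam ≤ pbar t → pbar t ≤ lam / ε → xf n t = 0) ∧
      (lam / ε ≤ pbar t →
        xf n t = (lam - ε * pbar t) / (((n : ℝ) + 1) * ε ^ 2 * p' t)) := by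
  have hpbar' : ∀ t ∈ Icc 1 T, 0 < pbar t := fun t ht => hpbar t (mem_Icc.1 ht).1 (mem_Icc.1 ht).2
  have hp'' : ∀ t ∈ Icc 1 T, 0 < p' t := fun t ht => hp' t (mem_Icc.1 ht).1 (mem_Icc.1 ht).2
  obtain ⟨lam, hlam, hsum⟩ :=
    exists_pos_sum_lagrangeIncrement_eq_zero (nonempty_Icc.2 hT) hpbar' hp'' hε0
  refine ⟨lam, hlam, fun n hn t ht1 ht2 => ?_⟩
  set c : ℝ := ((n : ℝ) + 1) / 2
  set xs : ℕ → ℝ := fun u => lagrangeIncrement (pbar u) (c * p' u) ε lam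
  have hxs : ∑ u ∈ Icc 1 T, xs u = 0 := by
    simp only [xs, lagrangeIncrement_mul, ← sum_div, hsum, zero_div]
  have hxs_min : ∀ u ∈ Icc 1 T, ∀ z, z ≠ xs u →
      periodLagrangian (pbar u) (c * p' u) ε lam (xs u) <
        periodLagrangian (pbar u) (c * p' u) ε lam z := fun u hu z hz =>
    have := hp'' u hu
    periodLagrangian_lagrangeIncrement_lt (hpbar' u hu).le (by positivity) hε0 hε1 hz
  have hle := hmin n hn xs hxs
  rw [symObj_eq_sum_periodLagrangian _ _ _ _ _ lam, hcyc n hn,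
    symObj_eq_sum_periodLagrangian _ _ _ _ _ lam, hxs, mul_zero, add_zero, add_zero] at hle
  have hxf : xf n t = lagrangeIncrement (pbar t) (c * p' t) ε lam :=
    eq_of_sum_le_sum_of_forall_lt hxs_min hle t (mem_Icc.2 ⟨ht1, ht2⟩)
  have hpb := (hpbar t ht1 ht2).le
  rw [hxf]
  refine ⟨fun h => ?_, fun h₁ h₂ => ?_, fun h => ?_⟩
  · rw [lagrangeIncrement_of_le hpb hε1 h.le]
    ring
  · exact lagrangeIncrement_eq_zero (by linarith [(le_div_iff₀ hε0).1 h₂]) h₁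
  · rw [lagrangeIncrement_of_le_mul hpb hε1 (by linarith [(div_le_iff₀ hε0).1 h])]
    ring
end

section
/- With linear prices, common efficiency, and no capacity or rate constraints (stores never emptying), at the unique symmetric n-store Nash equilibrium each store's profit equals ∑_{t=1}^T p'_t h(x_t(S̄⁽ⁿ⁾))², the per-store traded quantities are proportional to 1/(n+1) (i.e., h(x_t(S̄⁽ⁿ⁾)) = (2/(n+1)) h(x_t(S̄⁽¹⁾))), and hence the per-store profit is proportional to 1/(n+1)², so the total profit of the n stores equals 4n/(n+1)² times the single-store (monopoly) profit. -/
open Finset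

lemma hfun_eq_mul_add_mul_max (ε x : ℝ) : hfun ε x = ε * x + (1 - ε) * max x 0 := by
  unfold hfun
  split_ifs with hx
  · rw [max_eq_left hx]; ring
  · rw [max_eq_right (not_le.1 hx).le]; ring

lemma hfun_sq_eq (ε x : ℝ) : hfun ε x ^ 2 = ε ^ 2 * x ^ 2 + (1 - ε ^ 2) * max x 0 ^ 2 := by
  unfold hfun
  split_ifs with hx
  · rw [max_eq_left hx]; ring
  · rw [max_eq_right (not_le.1 hx).le]; ring

lemma hfun_mul {c : ℝ} (hc : 0 ≤ c) (ε x : ℝ) : hfun ε (c * x) = c * hfun ε x := by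
  have hmax : max (c * x) 0 = c * max x 0 := by rw [mul_max_of_nonneg _ _ hc, mul_zero]
  rw [hfun_eq_mul_add_mul_max, hfun_eq_mul_add_mul_max, hmax]
  ring

lemma convexOn_max_zero_sq : ConvexOn ℝ Set.univ fun x : ℝ => max x 0 ^ 2 :=
  ((convexOn_id convex_univ).sup (convexOn_const 0 convex_univ)).pow
    (fun x _ => le_max_right x 0) 2

lemma convexOn_hfun {ε : ℝ} (hε1 : ε ≤ 1) : ConvexOn ℝ Set.univ (hfun ε) := by
  have hlin : ConvexOn ℝ Set.univ fun x : ℝ => ε * x :=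
    (LinearMap.mulLeft ℝ ε).convexOn convex_univ
  have hmax : ConvexOn ℝ Set.univ fun x : ℝ => (1 - ε) * max x 0 :=
    ((convexOn_id convex_univ).sup (convexOn_const 0 convex_univ)).smul (sub_nonneg.2 hε1)
  rw [show hfun ε = _ from funext (hfun_eq_mul_add_mul_max ε)]
  exact hlin.add hmax

lemma StrictConvexOn.const_mul {s : Set ℝ} {f : ℝ → ℝ} {c : ℝ} (hc : 0 < c)
    (hf : StrictConvexOn ℝ s f) : StrictConvexOn ℝ s fun x => c * f x :=
  ⟨hf.1, fun x hx y hy hxy a b ha hb hab => by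
    have := mul_lt_mul_of_pos_left (hf.2 hx hy hxy ha hb hab) hc
    simp only [smul_eq_mul] at this ⊢
    linarith⟩

lemma strictConvexOn_hfun_sq {ε : ℝ} (hε0 : 0 < ε) (hε1 : ε ≤ 1) :
    StrictConvexOn ℝ Set.univ fun x => hfun ε x ^ 2 := by
  have hsq : StrictConvexOn ℝ Set.univ fun x : ℝ => ε ^ 2 * x ^ 2 :=
    (Even.strictConvexOn_pow even_two two_ne_zero).const_mul (by positivity)
  have hmax : ConvexOn ℝ Set.univ fun x : ℝ => (1 - ε ^ 2) * max x 0 ^ 2 :=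
    convexOn_max_zero_sq.smul (by nlinarith)
  simp only [hfun_sq_eq]
  exact hsq.add_convexOn hmax

lemma strictConvexOn_hfun_linear_add_quadratic {ε a b : ℝ} (hε0 : 0 < ε) (hε1 : ε ≤ 1)
    (ha : 0 ≤ a) (hb : 0 < b) :
    StrictConvexOn ℝ Set.univ fun x => a * hfun ε x + b * hfun ε x ^ 2 :=
  ((convexOn_hfun hε1).smul ha).add_strictConvexOn ((strictConvexOn_hfun_sq hε0 hε1).const_mul hb)

theorem Set.EqOn.of_isMinOn_sum_comp {ι : Type*} {s : Finset ι} {f : ι → ℝ → ℝ}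
    (hf : ∀ i ∈ s, StrictConvexOn ℝ Set.univ (f i)) {K : Set (ι → ℝ)} (hK : Convex ℝ K)
    {x y : ι → ℝ} (hx : x ∈ K) (hy : y ∈ K)
    (hxm : IsMinOn (fun z => ∑ i ∈ s, f i (z i)) K x)
    (hym : IsMinOn (fun z => ∑ i ∈ s, f i (z i)) K y) : Set.EqOn x y s := by
  by_contra hxy
  obtain ⟨i₀, hi₀, hne⟩ : ∃ i ∈ s, x i ≠ y i := by simpa [Set.EqOn] using hxy
  set z := (2 : ℝ)⁻¹ • x + (2 : ℝ)⁻¹ • y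
  have hz : z ∈ K := hK hx hy (by norm_num) (by norm_num) (by norm_num)
  have hlt : ∑ i ∈ s, f i (z i) <
      ∑ i ∈ s, ((2 : ℝ)⁻¹ * f i (x i) + (2 : ℝ)⁻¹ * f i (y i)) := by
    refine sum_lt_sum (fun i hi => (hf i hi).convexOn.2 trivial trivial ?_ ?_ ?_)
      ⟨i₀, hi₀, (hf i₀ hi₀).2 trivial trivial hne ?_ ?_ ?_⟩ <;> norm_num
  rw [sum_add_distrib, ← mul_sum, ← mul_sum] at hlt
  linarith [isMinOn_iff.1 hxm z hz, isMinOn_iff.1 hym z hz]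

theorem IsMinOn.smul_of_map_smul_eq {E : Type*} [AddCommGroup E] [Module ℝ E]
    {K : Submodule ℝ E} {f g : E → ℝ} {c : ℝ} (hc : 0 < c) (hfg : ∀ x, f (c • x) = c * g x)
    {x : E} (hx : IsMinOn g K x) : IsMinOn f K (c • x) := by
  refine isMinOn_iff.2 fun w hw => ?_
  have hw' : c⁻¹ • w ∈ K := K.smul_mem _ hw
  calc f (c • x) = c * g x := hfg x
    _ ≤ c * g (c⁻¹ • w) := mul_le_mul_of_nonneg_left (isMinOn_iff.1 hx _ hw') hc.le
    _ = f w := by rw [← hfg, smul_inv_smul₀ hc.ne']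

lemma add_two_mul_eq_zero_of_forall_le {A B : ℝ}
    (h : ∀ s : ℝ, 0 < s → A + B ≤ s * A + s ^ 2 * B) : A + 2 * B = 0 := by
  have hmin : IsLocalMin (fun s : ℝ => s * A + s ^ 2 * B) 1 := by
    filter_upwards [Ioi_mem_nhds one_pos] with s hs
    simpa using h s hs
  have hderiv : HasDerivAt (fun s : ℝ => s * A + s ^ 2 * B) (A + 2 * B) 1 := by
    have := ((hasDerivAt_id' (1 : ℝ)).mul_const A).fun_add ((hasDerivAt_pow 2 (1 : ℝ)).mul_const B)
    norm_num at this
    exact this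
  exact hmin.hasDerivAt_eq_zero hderiv

def sumZeroSubmodule {ι : Type*} (s : Finset ι) : Submodule ℝ (ι → ℝ) where
  carrier := {y | ∑ i ∈ s, y i = 0}
  add_mem' {x y} hx hy := by simp_all [sum_add_distrib]
  zero_mem' := by simp
  smul_mem' c x hx := by simp_all [← mul_sum]

section SymmetricEquilibrium

variable (T : ℕ) (pbar p' : ℕ → ℝ) (ε : ℝ)

noncomputable def linPart (x : ℕ → ℝ) : ℝ := ∑ t ∈ Icc 1 T, pbar t * hfun ε (x t)

noncomputable def quadPart (x : ℕ → ℝ) : ℝ := ∑ t ∈ Icc 1 T, p' t * hfun ε (x t) ^ 2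

lemma symObj_eq (n : ℕ) (x : ℕ → ℝ) :
    symObj T n pbar p' ε x = linPart T pbar ε x + ((n : ℝ) + 1) / 2 * quadPart T p' ε x := by
  simp only [symObj, linPart, quadPart, mul_sum, ← sum_add_distrib]
  exact sum_congr rfl fun t _ => by ring

lemma storeCost_eq (n : ℕ) (x : ℕ → ℝ) :
    ∑ t ∈ Icc 1 T, hfun ε (x t) * (pbar t + (n : ℝ) * p' t * hfun ε (x t)) =
      linPart T pbar ε x + n * quadPart T p' ε x := by
  simp only [linPart, quadPart, mul_sum, ← sum_add_distrib]
  exact sum_congr rfl fun t _ => by ring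

variable {T pbar p' ε}

lemma linPart_smul {c : ℝ} (hc : 0 ≤ c) (x : ℕ → ℝ) :
    linPart T pbar ε (c • x) = c * linPart T pbar ε x := by
  simp only [linPart, mul_sum, Pi.smul_apply, smul_eq_mul, hfun_mul hc]
  exact sum_congr rfl fun t _ => by ring

lemma quadPart_smul {c : ℝ} (hc : 0 ≤ c) (x : ℕ → ℝ) :
    quadPart T p' ε (c • x) = c ^ 2 * quadPart T p' ε x := by
  simp only [quadPart, mul_sum, Pi.smul_apply, smul_eq_mul, hfun_mul hc]
  exact sum_congr rfl fun t _ => by ring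

lemma symObj_smul_of_mul_eq {n m : ℕ} {c : ℝ} (hc : 0 ≤ c) (hcnm : c * ((n : ℝ) + 1) = m + 1)
    (x : ℕ → ℝ) : symObj T n pbar p' ε (c • x) = c * symObj T m pbar p' ε x := by
  rw [symObj_eq, symObj_eq, linPart_smul hc, quadPart_smul hc]
  linear_combination (c * quadPart T p' ε x / 2) * hcnm

lemma linPart_add_mul_quadPart_eq_zero {n : ℕ} {x : ℕ → ℝ}
    (hx : x ∈ sumZeroSubmodule (Icc 1 T))
    (hmin : IsMinOn (symObj T n pbar p' ε) (sumZeroSubmodule (Icc 1 T)) x) :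
    linPart T pbar ε x + ((n : ℝ) + 1) * quadPart T p' ε x = 0 := by
  have h := add_two_mul_eq_zero_of_forall_le
    (A := linPart T pbar ε x) (B := ((n : ℝ) + 1) / 2 * quadPart T p' ε x) fun s hs => by
      have hle := isMinOn_iff.1 hmin (s • x) (Submodule.smul_mem _ s hx)
      rw [symObj_eq, symObj_eq, linPart_smul hs.le, quadPart_smul hs.le] at hle
      linarith
  linear_combination h

lemma strictConvexOn_symObj_summand (hpbar : ∀ t, 1 ≤ t → t ≤ T → 0 < pbar t)
    (hp' : ∀ t, 1 ≤ t → t ≤ T → 0 < p' t) (hε0 : 0 < ε) (hε1 : ε ≤ 1) (n : ℕ) :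
    ∀ t ∈ Icc 1 T, StrictConvexOn ℝ Set.univ
      fun u => pbar t * hfun ε u + ((n : ℝ) + 1) / 2 * p' t * hfun ε u ^ 2 := by
  intro t ht
  obtain ⟨h1, h2⟩ := mem_Icc.1 ht
  exact strictConvexOn_hfun_linear_add_quadratic hε0 hε1 (hpbar t h1 h2).le
    (by have := hp' t h1 h2; positivity)

end SymmetricEquilibrium

theorem stmt17_general (T : ℕ) (pbar p' : ℕ → ℝ)
    (hpbar : ∀ t, 1 ≤ t → t ≤ T → 0 < pbar t) (hp' : ∀ t, 1 ≤ t → t ≤ T → 0 < p' t)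
    (ε : ℝ) (hε0 : 0 < ε) (hε1 : ε ≤ 1)
    (xf : ℕ → ℕ → ℝ)
    (hcyc : ∀ n, 1 ≤ n → ∑ t ∈ Finset.Icc 1 T, xf n t = 0)
    (hmin : ∀ n, 1 ≤ n → ∀ y : ℕ → ℝ, (∑ t ∈ Finset.Icc 1 T, y t = 0) →
      symObj T n pbar p' ε (xf n) ≤ symObj T n pbar p' ε y) :
    ∀ n, 1 ≤ n →
      -- per-store traded quantities are proportional to 1/(n+1)
      (∀ t, 1 ≤ t → t ≤ T →
        hfun ε (xf n t) = (2 / ((n : ℝ) + 1)) * hfun ε (xf 1 t)) ∧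
      -- each store's profit (the negative of its cost) equals ∑_t p'_t h(x_t)²
      (-(∑ t ∈ Finset.Icc 1 T, hfun ε (xf n t) *
            (pbar t + (n : ℝ) * p' t * hfun ε (xf n t))) =
        ∑ t ∈ Finset.Icc 1 T, p' t * (hfun ε (xf n t)) ^ 2) ∧
      -- per-store profit is 4/(n+1)² times the single-store profit
      ((∑ t ∈ Finset.Icc 1 T, p' t * (hfun ε (xf n t)) ^ 2) =
        (4 / ((n : ℝ) + 1) ^ 2) * ∑ t ∈ Finset.Icc 1 T, p' t * (hfun ε (xf 1 t)) ^ 2) ∧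
      -- total profit of the n stores is 4n/(n+1)² times the single-store profit
      ((n : ℝ) * ∑ t ∈ Finset.Icc 1 T, p' t * (hfun ε (xf n t)) ^ 2 =
        (4 * (n : ℝ) / ((n : ℝ) + 1) ^ 2) *
          ∑ t ∈ Finset.Icc 1 T, p' t * (hfun ε (xf 1 t)) ^ 2) := by
  intro n hn
  set K := sumZeroSubmodule (Icc 1 T)
  have hxf_min (m : ℕ) (hm : 1 ≤ m) : IsMinOn (symObj T m pbar p' ε) K (xf m) :=
    isMinOn_iff.2 (hmin m hm)
  set c : ℝ := 2 / ((n : ℝ) + 1) with hc_def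
  have hc : 0 < c := by positivity
  have hscaled_min : IsMinOn (symObj T n pbar p' ε) K (c • xf 1) :=
    (hxf_min 1 le_rfl).smul_of_map_smul_eq hc
      (symObj_smul_of_mul_eq hc.le (by rw [hc_def]; field_simp; norm_num))
  have hxf_eq : Set.EqOn (xf n) (c • xf 1) (Icc 1 T) :=
    .of_isMinOn_sum_comp (strictConvexOn_symObj_summand hpbar hp' hε0 hε1 n) K.convex (hcyc n hn)
      (K.smul_mem c (hcyc 1 le_rfl)) (hxf_min n hn) hscaled_min
  have hquantity (t : ℕ) (h1 : 1 ≤ t) (h2 : t ≤ T) : hfun ε (xf n t) = c * hfun ε (xf 1 t) := by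
    rw [hxf_eq (mem_Icc.2 ⟨h1, h2⟩)]
    exact hfun_mul hc.le ε _
  have hprofit : quadPart T p' ε (xf n) = 4 / ((n : ℝ) + 1) ^ 2 * quadPart T p' ε (xf 1) := by
    rw [← show c ^ 2 = 4 / ((n : ℝ) + 1) ^ 2 by rw [hc_def, div_pow]; norm_num, ← quadPart_smul hc.le]
    exact sum_congr rfl fun t ht => by rw [hxf_eq ht]
  have hfoc := linPart_add_mul_quadPart_eq_zero (hcyc n hn) (hxf_min n hn)
  refine ⟨hquantity, ?_, hprofit, ?_⟩
  · change _ = quadPart T p' ε (xf n)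
    rw [storeCost_eq]
    linear_combination -hfoc
  · change (n : ℝ) * quadPart T p' ε (xf n) = _ * quadPart T p' ε (xf 1)
    rw [hprofit]
    ring

/-- at the unconstrained symmetric `n`-store Cournot equilibrium
with linear prices, each store's profit equals `∑_t p'_t h(x_t)²`, the traded
quantities scale as `2/(n+1)` times the single-store quantities, the per-store
profit is `4/(n+1)²` times the single-store profit, and hence the total profit
of the `n` stores is `4n/(n+1)²` times the single-store (monopoly) profit. -/
theorem stmt17 (T : ℕ) (hT : 1 ≤ T) (pbar p' : ℕ → ℝ)
    (hpbar : ∀ t, 1 ≤ t → t ≤ T → 0 < pbar t) (hp' : ∀ t, 1 ≤ t → t ≤ T → 0 < p' t)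
    (ε : ℝ) (hε0 : 0 < ε) (hε1 : ε ≤ 1)
    (xf : ℕ → ℕ → ℝ)
    (hcyc : ∀ n, 1 ≤ n → ∑ t ∈ Finset.Icc 1 T, xf n t = 0)
    (hmin : ∀ n, 1 ≤ n → ∀ y : ℕ → ℝ, (∑ t ∈ Finset.Icc 1 T, y t = 0) →
      symObj T n pbar p' ε (xf n) ≤ symObj T n pbar p' ε y) :
    ∀ n, 1 ≤ n →
      -- per-store traded quantities are proportional to 1/(n+1)
      (∀ t, 1 ≤ t → t ≤ T →
        hfun ε (xf n t) = (2 / ((n : ℝ) + 1)) * hfun ε (xf 1 t)) ∧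
      -- each store's profit (the negative of its cost) equals ∑_t p'_t h(x_t)²
      (-(∑ t ∈ Finset.Icc 1 T, hfun ε (xf n t) *
            (pbar t + (n : ℝ) * p' t * hfun ε (xf n t))) =
        ∑ t ∈ Finset.Icc 1 T, p' t * (hfun ε (xf n t)) ^ 2) ∧
      -- per-store profit is 4/(n+1)² times the single-store profit
      ((∑ t ∈ Finset.Icc 1 T, p' t * (hfun ε (xf n t)) ^ 2) =
        (4 / ((n : ℝ) + 1) ^ 2) * ∑ t ∈ Finset.Icc 1 T, p' t * (hfun ε (xf 1 t)) ^ 2) ∧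
      -- total profit of the n stores is 4n/(n+1)² times the single-store profit
      ((n : ℝ) * ∑ t ∈ Finset.Icc 1 T, p' t * (hfun ε (xf n t)) ^ 2 =
        (4 * (n : ℝ) / ((n : ℝ) + 1) ^ 2) *
          ∑ t ∈ Finset.Icc 1 T, p' t * (hfun ε (xf 1 t)) ^ 2) :=
  stmt17_general T pbar p' hpbar hp' ε hε0 hε1 xf hcyc hmin
end

section
/- Suppose for t = 1, 2 the residual supply functions R_t: ℝ → ℝ are continuous and strictly increasing with R_t(ℝ) = ℝ, and each supply bid S_k: ℝ → ℝ is nondecreasing with ∑_k S_k continuous and strictly increasing and surjective. Then the system R₁(p₁) = ∑_k S_k(p), R₂(p₂) = −∑_k S_k(p), p₂ − p₁ = p, has at most one solution (p, p₁, p₂). -/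
/-!
A higher differential `p` raises the total bid `∑ₖ Sₖ(p)`, so consistency with `R₁` and `R₂`
forces `p₁` up and `p₂` down; hence `p₂ - p₁` falls as `p` rises and can equal `p` at most once.
-/

section TwoPeriodClearing

variable {α β : Type*} [AddCommGroup α] [LinearOrder α] [IsOrderedAddMonoid α]
  [AddCommGroup β] [PartialOrder β] [IsOrderedAddMonoid β]
  {R₁ R₂ T : α → β} {p p₁ p₂ q q₁ q₂ : α}

/-- `(p, p₁, p₂)` clears the two-period market with residual supplies `R₁, R₂` and total
store bid `T`. -/
def IsTwoPeriodClearing (R₁ R₂ T : α → β) (p p₁ p₂ : α) : Prop :=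
  R₁ p₁ = T p ∧ R₂ p₂ = -T p ∧ p₂ - p₁ = p

theorem IsTwoPeriodClearing.price_le (hR₁ : StrictMono R₁) (hR₂ : StrictMono R₂)
    (hT : StrictMono T) (hp : IsTwoPeriodClearing R₁ R₂ T p p₁ p₂)
    (hq : IsTwoPeriodClearing R₁ R₂ T q q₁ q₂) : q ≤ p := by
  obtain ⟨hp₁, hp₂, rfl⟩ := hp
  obtain ⟨hq₁, hq₂, rfl⟩ := hq
  by_contra! hpq
  have h₁ : p₁ < q₁ := hR₁.lt_iff_lt.mp (by rw [hp₁, hq₁]; exact hT hpq)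
  have h₂ : q₂ < p₂ := hR₂.lt_iff_lt.mp (by rw [hp₂, hq₂]; exact neg_lt_neg (hT hpq))
  exact hpq.not_gt (sub_lt_sub h₂ h₁)

theorem IsTwoPeriodClearing.unique (hR₁ : StrictMono R₁) (hR₂ : StrictMono R₂)
    (hT : StrictMono T) (hp : IsTwoPeriodClearing R₁ R₂ T p p₁ p₂)
    (hq : IsTwoPeriodClearing R₁ R₂ T q q₁ q₂) : p = q ∧ p₁ = q₁ ∧ p₂ = q₂ := by
  obtain rfl : p = q :=
    le_antisymm (hq.price_le hR₁ hR₂ hT hp) (hp.price_le hR₁ hR₂ hT hq)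
  exact ⟨rfl, hR₁.injective (hp.1.trans hq.1.symm), hR₂.injective (hp.2.1.trans hq.2.1.symm)⟩

end TwoPeriodClearing

theorem stmt19_general (n : ℕ) (R1 R2 : ℝ → ℝ)
    (hR1m : StrictMono R1)
    (hR2m : StrictMono R2)
    (S : Fin n → ℝ → ℝ)
    (hSm : StrictMono fun p => ∑ k, S k p) :
    ∀ p p1 p2 q q1 q2 : ℝ,
      (R1 p1 = ∑ k, S k p ∧ R2 p2 = -∑ k, S k p ∧ p2 - p1 = p) →
      (R1 q1 = ∑ k, S k q ∧ R2 q2 = -∑ k, S k q ∧ q2 - q1 = q) →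
      p = q ∧ p1 = q1 ∧ p2 = q2 :=
  fun _ _ _ _ _ _ hp hq => IsTwoPeriodClearing.unique hR1m hR2m hSm hp hq

/-- uniqueness of the two-period market clearing under supply
function bidding by stores.  With continuous, strictly increasing, surjective
residual supply functions `R₁, R₂`, and nondecreasing supply bids `S k` whose
sum is continuous, strictly increasing and surjective, the system
`R₁(p₁) = ∑_k S_k(p)`, `R₂(p₂) = −∑_k S_k(p)`, `p₂ − p₁ = p` has at most one
solution `(p, p₁, p₂)`. -/
theorem stmt19 (n : ℕ) (R1 R2 : ℝ → ℝ)
    (hR1c : Continuous R1) (hR1m : StrictMono R1) (hR1s : Function.Surjective R1)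
    (hR2c : Continuous R2) (hR2m : StrictMono R2) (hR2s : Function.Surjective R2)
    (S : Fin n → ℝ → ℝ) (hSmono : ∀ k, Monotone (S k))
    (hSc : Continuous fun p => ∑ k, S k p)
    (hSm : StrictMono fun p => ∑ k, S k p)
    (hSs : Function.Surjective fun p => ∑ k, S k p) :
    ∀ p p1 p2 q q1 q2 : ℝ,
      (R1 p1 = ∑ k, S k p ∧ R2 p2 = -∑ k, S k p ∧ p2 - p1 = p) →
      (R1 q1 = ∑ k, S k q ∧ R2 q2 = -∑ k, S k q ∧ q2 - q1 = q) →
      p = q ∧ p1 = q1 ∧ p2 = q2 :=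
  stmt19_general n R1 R2 hR1m hR2m S hSm
end
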